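/- Let σ > 0, β ≥ 0, let g : [0,∞) → [0,∞) be a nondecreasing continuous function with g(0) = 0, and take b = 0, c = 0, ν = 0 and μ(dz) = σ z^{−2} dz in the generator L. Then for V_log(x) = log(1+x) and every x ≥ 0 the integrals converge and LV_log(x) = σx[1 + log(1+x)]/(1+x) − g(x)/(1+x) + β/(1+x). -/

import Mathlib

/-!
With `a = 1 + x`, the jump part of `L V_log (x)` integrates `log (1 + z/a) - (z/a) 1_{z ≤ 1}`
against `σ z⁻² dz`. On `(0, 1]` the function `Φ z = -log (1 + z/a)/z - log (z + a)/a` is a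
primitive of `(log (1 + z/a) - z/a)/z²`, with `Φ (0+) = -(1 + log a)/a`; on `(1, ∞)` the function
`Φ + log/a` is a primitive of `log (1 + z/a)/z²` and vanishes at infinity. Both integrands have
constant sign, so the fundamental theorem of calculus also gives integrability, and the two
evaluations at `z = 1` cancel because `log 1 = 0`. Hence the jump integral is `σ (1 + log a)/a`,
and the drift term `(β - g x)/a` completes the formula.
-/

open MeasureTheory

/-- The Lévy measure `μ(dz) = σ z⁻² dz` on `(0,∞)` (Neveu branching case). -/
noncomputable def muNeveu (σ : ℝ) : Measure ℝ :=
  (volume.restrict (Set.Ioi (0 : ℝ))).withDensity (fun z => ENNReal.ofReal (σ / z ^ 2))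

open Real Set Filter Topology

lemma hasDerivAt_log_one_add_div {a z : ℝ} (ha : a ≠ 0) (hz : a + z ≠ 0) :
    HasDerivAt (fun w => log (1 + w / a)) (a + z)⁻¹ z := by
  have h : 1 + z / a ≠ 0 := by rwa [one_add_div ha, div_ne_zero_iff, and_iff_left ha]
  refine ((((hasDerivAt_id' z).div_const a).const_add 1).log h).congr_deriv ?_
  field_simp

lemma tendsto_log_one_add_div_div_nhdsNE {a : ℝ} (ha : a ≠ 0) :
    Tendsto (fun z => log (1 + z / a) / z) (𝓝[≠] 0) (𝓝 a⁻¹) := by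
  have h := hasDerivAt_iff_tendsto_slope.1
    (hasDerivAt_log_one_add_div (z := 0) ha (by rwa [add_zero]))
  rw [add_zero] at h
  refine h.congr fun z => ?_
  simp [slope_def_field]

lemma tendsto_log_one_add_div_div_atTop {a : ℝ} (ha : 0 < a) :
    Tendsto (fun z => log (1 + z / a) / z) atTop (𝓝 0) := by
  have h := (tendsto_pow_log_div_mul_add_atTop a (-a) 1 ha.ne').comp
    (tendsto_atTop_add_const_left atTop 1 (tendsto_id.atTop_div_const ha))
  refine h.congr fun z => ?_
  simp only [Function.comp_apply, pow_one, id]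
  congr 1
  field_simp
  ring

noncomputable def logJumpPrimitive (a z : ℝ) : ℝ := -log (1 + z / a) / z - log (z + a) / a

section logJumpPrimitive

variable {a : ℝ}

lemma hasDerivAt_logJumpPrimitive (ha : 0 < a) {z : ℝ} (hz : 0 < z) :
    HasDerivAt (logJumpPrimitive a) ((log (1 + z / a) - z / a) / z ^ 2) z := by
  have d1 := (hasDerivAt_log_one_add_div ha.ne' (by linarith)).neg.div (hasDerivAt_id' z) hz.ne'
  have d2 := (((hasDerivAt_id' z).add_const a).log (by linarith : z + a ≠ 0)).div_const a
  refine (d1.sub d2).congr_deriv ?_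
  simp only [Pi.neg_apply]
  field_simp
  ring

lemma tendsto_logJumpPrimitive_nhdsNE_zero (ha : 0 < a) :
    Tendsto (logJumpPrimitive a) (𝓝[≠] 0) (𝓝 (-(1 + log a) / a)) := by
  have hlog : ContinuousAt (fun z => log (z + a) / a) 0 :=
    ((continuous_add_const a).continuousAt.log (by simpa using ha.ne')).div_const a
  have h := (tendsto_log_one_add_div_div_nhdsNE ha.ne').neg.sub
    ((zero_add a ▸ hlog.tendsto).mono_left nhdsWithin_le_nhds)
  convert h using 1
  · ext z
    simp only [logJumpPrimitive, neg_div]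
  · congr 1
    ring

lemma hasDerivAt_logJumpPrimitive_add_log_div (ha : 0 < a) {z : ℝ} (hz : 0 < z) :
    HasDerivAt (fun w => logJumpPrimitive a w + log w / a) (log (1 + z / a) / z ^ 2) z := by
  refine ((hasDerivAt_logJumpPrimitive ha hz).add
    ((hasDerivAt_log hz.ne').div_const a)).congr_deriv ?_
  field_simp
  ring

lemma tendsto_logJumpPrimitive_add_log_div_atTop (ha : 0 < a) :
    Tendsto (fun z => logJumpPrimitive a z + log z / a) atTop (𝓝 0) := by
  have h := (tendsto_log_one_add_div_div_atTop ha).neg.sub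
    ((tendsto_log_comp_add_sub_log a).div_const a)
  rw [neg_zero, zero_div, sub_zero] at h
  refine h.congr fun z => ?_
  simp only [logJumpPrimitive]
  ring

-- `logJumpPrimitive a 0` is a junk value (`x / 0 = 0`), so the limit at `0⁺` is patched in.
lemma continuousOn_update_logJumpPrimitive (ha : 0 < a) :
    ContinuousOn (Function.update (logJumpPrimitive a) 0 (-(1 + log a) / a)) (Ici 0) := by
  intro z hz
  rcases (mem_Ici.1 hz).eq_or_lt with rfl | hz
  · exact continuousWithinAt_update_same.2
      ((tendsto_logJumpPrimitive_nhdsNE_zero ha).mono_left (nhdsWithin_mono _ fun w hw => hw.2))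
  · refine ((hasDerivAt_logJumpPrimitive ha hz).continuousAt.congr ?_).continuousWithinAt
    filter_upwards [eventually_ne_nhds hz.ne'] with w hw using (Function.update_of_ne hw ..).symm

lemma hasDerivAt_update_logJumpPrimitive (ha : 0 < a) {z : ℝ} (hz : 0 < z) :
    HasDerivAt (Function.update (logJumpPrimitive a) 0 (-(1 + log a) / a))
      ((log (1 + z / a) - z / a) / z ^ 2) z := by
  refine (hasDerivAt_logJumpPrimitive ha hz).congr_of_eventuallyEq ?_
  filter_upwards [eventually_ne_nhds hz.ne'] with w hw using Function.update_of_ne hw ..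

end logJumpPrimitive

noncomputable def compensatedLogJump (a z : ℝ) : ℝ :=
  log (1 + z / a) - z / a * (if z ≤ 1 then 1 else 0)

section compensatedLogJump

variable {a : ℝ}

lemma eqOn_compensatedLogJump_div_sq_Ioc :
    EqOn (fun z => compensatedLogJump a z / z ^ 2) (fun z => (log (1 + z / a) - z / a) / z ^ 2)
      (Ioc 0 1) :=
  fun z hz => by simp [compensatedLogJump, hz.2]

lemma eqOn_compensatedLogJump_div_sq_Ioi :
    EqOn (fun z => compensatedLogJump a z / z ^ 2) (fun z => log (1 + z / a) / z ^ 2) (Ioi 1) :=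
  fun z hz => by simp [compensatedLogJump, not_le.2 (mem_Ioi.1 hz)]

lemma integrableOn_Ioc_compensatedLogJump_div_sq (ha : 0 < a) :
    IntegrableOn (fun z => compensatedLogJump a z / z ^ 2) (Ioc 0 1) := by
  have hnonpos : ∀ z ∈ Ioo (0 : ℝ) 1, (log (1 + z / a) - z / a) / z ^ 2 ≤ 0 := fun z hz => by
    have := log_le_sub_one_of_pos (by have := hz.1; positivity : 0 < 1 + z / a)
    exact div_nonpos_of_nonpos_of_nonneg (by linarith) (sq_nonneg z)
  have h := intervalIntegral.integrableOn_deriv_of_nonneg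
    ((continuousOn_update_logJumpPrimitive ha).mono Icc_subset_Ici_self).neg
    (fun z hz => (hasDerivAt_update_logJumpPrimitive ha hz.1).neg)
    fun z hz => neg_nonneg.2 (hnonpos z hz)
  have h' : IntegrableOn (fun z => (log (1 + z / a) - z / a) / z ^ 2) (Ioc 0 1) :=
    integrable_neg_iff.1 h
  exact h'.congr_fun eqOn_compensatedLogJump_div_sq_Ioc.symm measurableSet_Ioc

lemma setIntegral_Ioc_compensatedLogJump_div_sq (ha : 0 < a) :
    ∫ z in Ioc 0 1, compensatedLogJump a z / z ^ 2 = logJumpPrimitive a 1 + (1 + log a) / a := by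
  have hint := (integrableOn_Ioc_compensatedLogJump_div_sq ha).congr_fun
    eqOn_compensatedLogJump_div_sq_Ioc measurableSet_Ioc
  rw [setIntegral_congr_fun measurableSet_Ioc eqOn_compensatedLogJump_div_sq_Ioc,
    ← intervalIntegral.integral_of_le zero_le_one,
    intervalIntegral.integral_eq_sub_of_hasDerivAt_of_le zero_le_one
      ((continuousOn_update_logJumpPrimitive ha).mono Icc_subset_Ici_self)
      (fun z hz => hasDerivAt_update_logJumpPrimitive ha hz.1)
      ((intervalIntegrable_iff_integrableOn_Ioc_of_le zero_le_one).2 hint),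
    Function.update_self, Function.update_of_ne one_ne_zero]
  ring

lemma log_one_add_div_div_sq_nonneg (ha : 0 < a) {z : ℝ} (hz : 0 ≤ z) :
    0 ≤ log (1 + z / a) / z ^ 2 :=
  div_nonneg (log_nonneg (le_add_of_nonneg_right (div_nonneg hz ha.le))) (sq_nonneg z)

lemma integrableOn_Ioi_one_compensatedLogJump_div_sq (ha : 0 < a) :
    IntegrableOn (fun z => compensatedLogJump a z / z ^ 2) (Ioi 1) :=
  (integrableOn_Ioi_deriv_of_nonneg'
    (fun _ hz => hasDerivAt_logJumpPrimitive_add_log_div ha (zero_lt_one.trans_le hz))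
    (fun _ hz => log_one_add_div_div_sq_nonneg ha (zero_le_one.trans hz.out.le))
    (tendsto_logJumpPrimitive_add_log_div_atTop ha)).congr_fun
    eqOn_compensatedLogJump_div_sq_Ioi.symm measurableSet_Ioi

lemma setIntegral_Ioi_one_compensatedLogJump_div_sq (ha : 0 < a) :
    ∫ z in Ioi 1, compensatedLogJump a z / z ^ 2 = -logJumpPrimitive a 1 := by
  rw [setIntegral_congr_fun measurableSet_Ioi eqOn_compensatedLogJump_div_sq_Ioi,
    integral_Ioi_of_hasDerivAt_of_nonneg'
      (fun _ hz => hasDerivAt_logJumpPrimitive_add_log_div ha (zero_lt_one.trans_le hz))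
      (fun _ hz => log_one_add_div_div_sq_nonneg ha (zero_le_one.trans hz.out.le))
      (tendsto_logJumpPrimitive_add_log_div_atTop ha), log_one]
  ring

lemma integrableOn_Ioi_zero_compensatedLogJump_div_sq (ha : 0 < a) :
    IntegrableOn (fun z => compensatedLogJump a z / z ^ 2) (Ioi 0) := by
  rw [← Ioc_union_Ioi_eq_Ioi zero_le_one]
  exact (integrableOn_Ioc_compensatedLogJump_div_sq ha).union
    (integrableOn_Ioi_one_compensatedLogJump_div_sq ha)

lemma setIntegral_Ioi_zero_compensatedLogJump_div_sq (ha : 0 < a) :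
    ∫ z in Ioi 0, compensatedLogJump a z / z ^ 2 = (1 + log a) / a := by
  rw [← Ioc_union_Ioi_eq_Ioi zero_le_one, setIntegral_union Ioc_disjoint_Ioi_same measurableSet_Ioi
      (integrableOn_Ioc_compensatedLogJump_div_sq ha)
      (integrableOn_Ioi_one_compensatedLogJump_div_sq ha),
    setIntegral_Ioc_compensatedLogJump_div_sq ha, setIntegral_Ioi_one_compensatedLogJump_div_sq ha]
  ring

end compensatedLogJump

section muNeveu

variable {σ : ℝ}

lemma muNeveu_restrict_Ioi (σ : ℝ) : (muNeveu σ).restrict (Ioi 0) = muNeveu σ := by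
  rw [muNeveu, restrict_withDensity measurableSet_Ioi, Measure.restrict_restrict measurableSet_Ioi,
    inter_self]

lemma toReal_density_smul_muNeveu (hσ : 0 ≤ σ) (f : ℝ → ℝ) (z : ℝ) :
    (ENNReal.ofReal (σ / z ^ 2)).toReal • f z = σ * (f z / z ^ 2) := by
  rw [ENNReal.toReal_ofReal (by positivity), smul_eq_mul]
  ring

lemma integrableOn_Ioi_muNeveu_iff (hσ : 0 < σ) {f : ℝ → ℝ} :
    IntegrableOn f (Ioi 0) (muNeveu σ) ↔ IntegrableOn (fun z => f z / z ^ 2) (Ioi 0) := by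
  rw [IntegrableOn, muNeveu_restrict_Ioi, muNeveu, integrable_withDensity_iff_integrable_smul'
    (by fun_prop) (ae_of_all _ fun _ => ENNReal.ofReal_lt_top)]
  simp only [toReal_density_smul_muNeveu hσ.le]
  exact integrable_const_mul_iff (isUnit_iff_ne_zero.2 hσ.ne') _

lemma setIntegral_Ioi_muNeveu (hσ : 0 ≤ σ) (f : ℝ → ℝ) :
    ∫ z in Ioi 0, f z ∂muNeveu σ = σ * ∫ z in Ioi 0, f z / z ^ 2 := by
  rw [muNeveu_restrict_Ioi, muNeveu, integral_withDensity_eq_integral_toReal_smul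
    (by fun_prop) (ae_of_all _ fun _ => ENNReal.ofReal_lt_top)]
  simp only [toReal_density_smul_muNeveu hσ, integral_const_mul]

end muNeveu

theorem generator_Vlog_neveu_general
    (σ β : ℝ) (hσ : 0 < σ)
    (g : ℝ → ℝ) :
    ∀ x : ℝ, 0 ≤ x →
      MeasureTheory.IntegrableOn
        (fun z => Real.log (1 + z / (1 + x)) - (z / (1 + x)) * (if z ≤ 1 then 1 else 0))
        (Set.Ioi 0) (muNeveu σ) ∧
      x * (∫ z in Set.Ioi (0 : ℝ),
          (Real.log (1 + z / (1 + x)) - (z / (1 + x)) * (if z ≤ 1 then 1 else 0)) ∂(muNeveu σ))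
        + (β - g x) / (1 + x)
        = σ * x * (1 + Real.log (1 + x)) / (1 + x) - g x / (1 + x) + β / (1 + x) := by
  intro x hx
  have ha : 0 < 1 + x := by linarith
  show IntegrableOn (compensatedLogJump (1 + x)) (Ioi 0) (muNeveu σ) ∧
    x * (∫ z in Ioi 0, compensatedLogJump (1 + x) z ∂muNeveu σ) + (β - g x) / (1 + x) = _
  rw [integrableOn_Ioi_muNeveu_iff hσ, setIntegral_Ioi_muNeveu hσ.le,
    setIntegral_Ioi_zero_compensatedLogJump_div_sq ha]
  refine ⟨integrableOn_Ioi_zero_compensatedLogJump_div_sq ha, ?_⟩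
  field_simp
  ring

theorem generator_Vlog_neveu
    (σ β : ℝ) (hσ : 0 < σ) (hβ : 0 ≤ β)
    (g : ℝ → ℝ) (hg0 : g 0 = 0) (hgmono : MonotoneOn g (Set.Ici 0))
    (hgcont : ContinuousOn g (Set.Ici 0)) (hgnonneg : ∀ x ∈ Set.Ici (0 : ℝ), 0 ≤ g x) :
    ∀ x : ℝ, 0 ≤ x →
      MeasureTheory.IntegrableOn
        (fun z => Real.log (1 + z / (1 + x)) - (z / (1 + x)) * (if z ≤ 1 then 1 else 0))
        (Set.Ioi 0) (muNeveu σ) ∧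
      x * (∫ z in Set.Ioi (0 : ℝ),
          (Real.log (1 + z / (1 + x)) - (z / (1 + x)) * (if z ≤ 1 then 1 else 0)) ∂(muNeveu σ))
        + (β - g x) / (1 + x)
        = σ * x * (1 + Real.log (1 + x)) / (1 + x) - g x / (1 + x) + β / (1 + x) :=
  generator_Vlog_neveu_general σ β hσ g
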